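/- Let K ≥ 1, T ≥ 1, η > 0, and let x̂_t(i) ≥ 0 for t = 1,…,T and i = 1,…,K satisfy η·x̂_t(i) ≤ 1 for all t, i. Define weights w_1(i) = 1 and w_{t+1}(i) = w_t(i)·exp(η·x̂_t(i)), and probabilities p_t(i) = w_t(i) / ∑_{j=1}^K w_t(j). Then for every j ∈ {1,…,K}: ∑_{t=1}^T x̂_t(j) − ∑_{t=1}^T ∑_{i=1}^K p_t(i)·x̂_t(i) ≤ (e−2)·η·∑_{t=1}^T ∑_{i=1}^K p_t(i)·x̂_t(i)² + (ln K)/η. -/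

import Mathlib

/-- Exponential-weights weight sequence: `w 0 i = 1` and
`w (t+1) i = w t i · exp(η · x̂ t i)`. -/
noncomputable def ewWeight (K : ℕ) (η : ℝ) (xhat : ℕ → Fin K → ℝ) :
    ℕ → Fin K → ℝ
  | 0 => fun _ => 1
  | t + 1 => fun i => ewWeight K η xhat t i * Real.exp (η * xhat t i)

/-- Exponential-weights probabilities `p t i = w t i / ∑ j, w t j`. -/
noncomputable def ewProb (K : ℕ) (η : ℝ) (xhat : ℕ → Fin K → ℝ)
    (t : ℕ) (i : Fin K) : ℝ :=
  ewWeight K η xhat t i / ∑ j, ewWeight K η xhat t j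


/-!
Hedge potential argument. The total weight `W t = ∑ i, w t i` starts at `K`. Since
`exp y ≤ 1 + y + (e - 2) y²` on `[0, 1]` and `1 + a ≤ exp a`, each round multiplies it by at most
`exp (η ⟨p t, x̂ t⟩ + (e - 2) η² ⟨p t, x̂ t²⟩)`, so `log W T ≤ log K + ∑ₜ (…)`. On the other hand
`W T ≥ w T j = exp (η ∑ₜ x̂ t j)`; comparing the two bounds and dividing by `η` gives the regret bound.
-/

open Finset Real

open scoped Nat

lemma hasSum_exp_sub_one_sub (x : ℝ) :
    HasSum (fun n : ℕ => x ^ (n + 2) / (n + 2)!) (exp x - 1 - x) := by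
  have h := (hasSum_nat_add_iff' 2).mpr (exp_eq_exp_ℝ ▸ NormedSpace.expSeries_div_hasSum_exp x)
  simpa [sum_range_succ, sub_sub] using h

lemma exp_le_one_add_add_mul_sq {x : ℝ} (h0 : 0 ≤ x) (h1 : x ≤ 1) :
    exp x ≤ 1 + x + (exp 1 - 2) * x ^ 2 := by
  have termwise (n : ℕ) : x ^ (n + 2) / (n + 2)! ≤ x ^ 2 * (1 ^ (n + 2) / (n + 2)!) := by
    calc x ^ (n + 2) / (n + 2)! = x ^ 2 * (x ^ n / (n + 2)!) := by ring
      _ ≤ x ^ 2 * (1 ^ (n + 2) / (n + 2)!) := by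
        gcongr
        rw [one_pow]
        exact pow_le_one₀ h0 h1
  have := hasSum_le termwise (hasSum_exp_sub_one_sub x) ((hasSum_exp_sub_one_sub 1).mul_left _)
  linarith

section ExponentialWeights

variable {K : ℕ} {η : ℝ} {xhat : ℕ → Fin K → ℝ}

noncomputable def ewTotalWeight (K : ℕ) (η : ℝ) (xhat : ℕ → Fin K → ℝ) (t : ℕ) : ℝ :=
  ∑ i, ewWeight K η xhat t i

lemma ewWeight_succ (t : ℕ) (i : Fin K) :
    ewWeight K η xhat (t + 1) i = ewWeight K η xhat t i * exp (η * xhat t i) :=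
  rfl

lemma ewWeight_pos (t : ℕ) (i : Fin K) : 0 < ewWeight K η xhat t i := by
  induction t with
  | zero => simp [ewWeight]
  | succ t ih => exact mul_pos ih (exp_pos _)

lemma ewWeight_eq_exp (t : ℕ) (i : Fin K) :
    ewWeight K η xhat t i = exp (η * ∑ s ∈ range t, xhat s i) := by
  induction t with
  | zero => simp [ewWeight]
  | succ t ih => rw [ewWeight_succ, ih, ← exp_add, sum_range_succ, mul_add]

lemma ewTotalWeight_zero : ewTotalWeight K η xhat 0 = K := by
  simp [ewTotalWeight, ewWeight]

lemma ewTotalWeight_pos [Nonempty (Fin K)] (t : ℕ) : 0 < ewTotalWeight K η xhat t :=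
  sum_pos (fun i _ => ewWeight_pos t i) univ_nonempty

lemma ewWeight_eq_mul_ewProb [Nonempty (Fin K)] (t : ℕ) (i : Fin K) :
    ewWeight K η xhat t i = ewTotalWeight K η xhat t * ewProb K η xhat t i :=
  (mul_div_cancel₀ _ (ewTotalWeight_pos t).ne').symm

lemma sum_ewProb [Nonempty (Fin K)] (t : ℕ) : ∑ i, ewProb K η xhat t i = 1 := by
  simp only [ewProb, ← sum_div]
  exact div_self (ewTotalWeight_pos t).ne'

lemma ewTotalWeight_succ_le [Nonempty (Fin K)] {t : ℕ} (h0 : ∀ i, 0 ≤ η * xhat t i)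
    (h1 : ∀ i, η * xhat t i ≤ 1) :
    ewTotalWeight K η xhat (t + 1) ≤ ewTotalWeight K η xhat t *
      (1 + η * ∑ i, ewProb K η xhat t i * xhat t i +
        (exp 1 - 2) * η ^ 2 * ∑ i, ewProb K η xhat t i * xhat t i ^ 2) := by
  calc ewTotalWeight K η xhat (t + 1) = ∑ i, ewWeight K η xhat t i * exp (η * xhat t i) := rfl
    _ ≤ ∑ i, ewWeight K η xhat t i * (1 + η * xhat t i + (exp 1 - 2) * (η * xhat t i) ^ 2) :=
      sum_le_sum fun i _ => mul_le_mul_of_nonneg_left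
        (exp_le_one_add_add_mul_sq (h0 i) (h1 i)) (ewWeight_pos t i).le
    _ = ewTotalWeight K η xhat t * ∑ i, (ewProb K η xhat t i +
          η * (ewProb K η xhat t i * xhat t i) +
          (exp 1 - 2) * η ^ 2 * (ewProb K η xhat t i * xhat t i ^ 2)) := by
      rw [mul_sum]
      refine sum_congr rfl fun i _ => ?_
      rw [ewWeight_eq_mul_ewProb]
      ring
    _ = _ := by rw [sum_add_distrib, sum_add_distrib, ← mul_sum, ← mul_sum, sum_ewProb]

lemma log_ewTotalWeight_succ_le [Nonempty (Fin K)] {t : ℕ} (h0 : ∀ i, 0 ≤ η * xhat t i)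
    (h1 : ∀ i, η * xhat t i ≤ 1) :
    log (ewTotalWeight K η xhat (t + 1)) ≤ log (ewTotalWeight K η xhat t) +
      (η * ∑ i, ewProb K η xhat t i * xhat t i +
        (exp 1 - 2) * η ^ 2 * ∑ i, ewProb K η xhat t i * xhat t i ^ 2) := by
  set a := η * ∑ i, ewProb K η xhat t i * xhat t i +
    (exp 1 - 2) * η ^ 2 * ∑ i, ewProb K η xhat t i * xhat t i ^ 2
  have hW := ewTotalWeight_pos (η := η) (xhat := xhat) t
  have hgrowth : ewTotalWeight K η xhat (t + 1) ≤ ewTotalWeight K η xhat t * exp a := by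
    refine (ewTotalWeight_succ_le h0 h1).trans (mul_le_mul_of_nonneg_left ?_ hW.le)
    linarith [add_one_le_exp a]
  calc log (ewTotalWeight K η xhat (t + 1)) ≤ log (ewTotalWeight K η xhat t * exp a) :=
        log_le_log (ewTotalWeight_pos _) hgrowth
    _ = log (ewTotalWeight K η xhat t) + a := by rw [log_mul hW.ne' (exp_pos a).ne', log_exp]

lemma log_ewTotalWeight_le [Nonempty (Fin K)] {T : ℕ} (h0 : ∀ t < T, ∀ i, 0 ≤ η * xhat t i)
    (h1 : ∀ t < T, ∀ i, η * xhat t i ≤ 1) :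
    log (ewTotalWeight K η xhat T) ≤ log K +
      (η * ∑ t ∈ range T, ∑ i, ewProb K η xhat t i * xhat t i +
        (exp 1 - 2) * η ^ 2 * ∑ t ∈ range T, ∑ i, ewProb K η xhat t i * xhat t i ^ 2) := by
  have := sum_le_sum fun t (ht : t ∈ range T) =>
    sub_le_iff_le_add'.2 (log_ewTotalWeight_succ_le (xhat := xhat)
      (h0 t (mem_range.1 ht)) (h1 t (mem_range.1 ht)))
  rw [sum_range_sub (fun t => log (ewTotalWeight K η xhat t)), ewTotalWeight_zero, sum_add_distrib, ← mul_sum, ← mul_sum] at this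
  linarith

lemma mul_sum_le_log_ewTotalWeight (T : ℕ) (j : Fin K) :
    η * ∑ t ∈ range T, xhat t j ≤ log (ewTotalWeight K η xhat T) := by
  rw [← log_exp (η * _), ← ewWeight_eq_exp]
  exact log_le_log (ewWeight_pos T j)
    (single_le_sum (fun i _ => (ewWeight_pos T i).le) (mem_univ j))

end ExponentialWeights

theorem ew_regret_general (K T : ℕ)
    (η : ℝ) (hη : 0 < η)
    (xhat : ℕ → Fin K → ℝ)
    (hx0 : ∀ t < T, ∀ i, 0 ≤ xhat t i)
    (hx1 : ∀ t < T, ∀ i, η * xhat t i ≤ 1)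
    (j : Fin K) :
    ∑ t ∈ Finset.range T, xhat t j -
        ∑ t ∈ Finset.range T, ∑ i, ewProb K η xhat t i * xhat t i ≤
      (Real.exp 1 - 2) * η *
          ∑ t ∈ Finset.range T, ∑ i, ewProb K η xhat t i * xhat t i ^ 2 +
        Real.log K / η := by
  have : Nonempty (Fin K) := ⟨j⟩
  have hlower := mul_sum_le_log_ewTotalWeight (η := η) (xhat := xhat) T j
  have hupper := log_ewTotalWeight_le (fun t ht i => mul_nonneg hη.le (hx0 t ht i)) hx1
  rw [← mul_le_mul_iff_right₀ hη, mul_sub, mul_add, mul_div_cancel₀ _ hη.ne']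
  linarith

/-- deterministic regret guarantee of the exponential-weights
update: for nonnegative estimated rewards `x̂ t i` with `η·x̂ t i ≤ 1`, and
for every `j`,
`∑_t x̂ t j − ∑_t ∑_i p t i·x̂ t i ≤ (e−2)·η·∑_t ∑_i p t i·(x̂ t i)² + (ln K)/η`.
(Rounds `t = 1,…,T` are indexed by `t ∈ range T`.) -/
theorem ew_regret (K T : ℕ) (hK : 1 ≤ K) (hT : 1 ≤ T)
    (η : ℝ) (hη : 0 < η)
    (xhat : ℕ → Fin K → ℝ)
    (hx0 : ∀ t < T, ∀ i, 0 ≤ xhat t i)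
    (hx1 : ∀ t < T, ∀ i, η * xhat t i ≤ 1)
    (j : Fin K) :
    ∑ t ∈ Finset.range T, xhat t j -
        ∑ t ∈ Finset.range T, ∑ i, ewProb K η xhat t i * xhat t i ≤
      (Real.exp 1 - 2) * η *
          ∑ t ∈ Finset.range T, ∑ i, ewProb K η xhat t i * xhat t i ^ 2 +
        Real.log K / η :=
  ew_regret_general K T η hη xhat hx0 hx1 j
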